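/- arXiv:1606.04756 — 8 statements merged into one kernel-verified Lean document; each statement's English description precedes it below -/
import Mathlib

section
/- If α_i = 0 for all i, then Σ_{k=i}^{n} C(k,i)·r^{k-i}·w_{m,r;0}(n,k) = δ_{n,i} (Kronecker delta). -/
/-!
Substituting `y = m x`, the defining relation says that `∑ₖ w(n,k) (y + r)^k = y^n` as polynomials
in `y`. Expanding `(y + r)^k` binomially, the left-hand side of the theorem is the coefficient of
`y^i` in that sum, hence the coefficient of `y^i` in `y^n`.
-/

open Finset Polynomial

theorem coeff_sum_C_mul_X_add_C_pow {R : Type*} [CommRing R] (w : ℕ → R) (r : R) (n i : ℕ) :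
    (∑ k ∈ range (n + 1), C (w k) * (X + C r) ^ k).coeff i =
      ∑ k ∈ Icc i n, (k.choose i : R) * r ^ (k - i) * w k := by
  rw [finsetSum_coeff]
  symm
  refine sum_subset (fun k hk => ?_) (fun k _ hk => ?_) |>.trans (sum_congr rfl fun k _ => ?_)
  · simp only [mem_Icc] at hk
    exact mem_range.mpr (by omega)
  · have hki : k < i := by simp_all
    simp [Nat.choose_eq_zero_of_lt hki]
  · rw [coeff_C_mul, coeff_X_add_C_pow]
    ring

theorem sum_C_mul_X_add_C_pow_eq_X_pow {K : Type*} [Field K] [Infinite K] (m r : K) (hm : m ≠ 0)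
    (w : ℕ → K) (n : ℕ) (hw : ∀ x : K, m ^ n * x ^ n = ∑ k ∈ range (n + 1), w k * (m * x + r) ^ k) :
    ∑ k ∈ range (n + 1), C (w k) * (X + C r) ^ k = X ^ n := by
  refine Polynomial.funext fun y => ?_
  have hy := hw (y / m)
  rw [← mul_pow, mul_div_cancel₀ y hm] at hy
  simp [eval_finsetSum, hy]

theorem stmt_2 (m r : ℝ) (hm : m ≠ 0) (w : ℕ → ℕ → ℝ)
    (hw : ∀ n : ℕ, ∀ x : ℝ, m ^ n * x ^ n =
      ∑ k ∈ range (n + 1), w n k * (m * x + r) ^ k) :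
    ∀ n i : ℕ, ∑ k ∈ Icc i n, (k.choose i : ℝ) * r ^ (k - i) * w n k =
      if n = i then 1 else 0 := by
  intro n i
  rw [← coeff_sum_C_mul_X_add_C_pow, sum_C_mul_X_add_C_pow_eq_X_pow m r hm (w n) n (hw n),
    coeff_X_pow]
  exact if_congr eq_comm rfl rfl
end

section
/- The generalized r-Whitney numbers of the second kind have the explicit formula W_{m,r;α}(n,k) = Σ_{i=0}^{k} (r + m·α_i)^n / (m^k · ∏_{j=0, j≠i}^{k} (α_i - α_j)). -/
/-!
Evaluating the defining identity at the nodes `x = α₀, …, α_k` and taking the divided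
difference `p ↦ ∑ᵢ p(αᵢ) / ∏_{j ≠ i} (αᵢ - αⱼ)` of both sides isolates `W(n,k) mᵏ`: this
functional reads off the coefficient of `xᵏ` of a polynomial of degree at most `k`, so it sends
the Newton basis polynomial `(x;α)_l` to `1` if `l = k` and to `0` if `l < k`, while for `l > k`
the polynomial `(x;α)_l` vanishes at every node.
-/

open Finset Polynomial

variable {F : Type*} [Field F]

theorem sum_prod_range_sub_div_prod_erase {α : ℕ → F} {k : ℕ} (hα : Set.InjOn α (range (k + 1)))
    (l : ℕ) :
    ∑ i ∈ range (k + 1), (∏ j ∈ range l, (α i - α j)) / ∏ j ∈ (range (k + 1)).erase i, (α i - α j)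
      = if l = k then 1 else 0 := by
  rcases lt_or_ge k l with hkl | hlk
  · rw [if_neg hkl.ne']
    refine sum_eq_zero fun i hi => ?_
    have hil : i ∈ range l := mem_range.mpr ((mem_range.mp hi).trans_le hkl)
    rw [prod_eq_zero hil (sub_self _), zero_div]
  · have hdeg : (Lagrange.nodal (range l) α).degree < #(range (k + 1)) := by
      rw [Lagrange.degree_nodal, card_range, card_range]
      exact_mod_cast Nat.lt_succ_of_le hlk
    have hcoeff := Lagrange.coeff_eq_sum hα hdeg
    simp only [Lagrange.eval_nodal, card_range, Nat.add_sub_cancel] at hcoeff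
    rw [← hcoeff]
    have hnat : (Lagrange.nodal (range l) α).natDegree = l := by
      rw [Lagrange.natDegree_nodal, card_range]
    rcases hlk.eq_or_lt with rfl | hlk
    · rw [if_pos rfl]
      simpa only [hnat] using (Lagrange.nodal_monic (s := range l) (v := α)).coeff_natDegree
    · rw [if_neg hlk.ne, coeff_eq_zero_of_natDegree_lt (hnat.trans_lt hlk)]

theorem sum_newton_div_prod_erase {α : ℕ → F} {k n : ℕ} (hα : Set.InjOn α (range (k + 1)))
    (hkn : k ≤ n) (c : ℕ → F) :
    ∑ i ∈ range (k + 1),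
        (∑ l ∈ range (n + 1), c l * ∏ j ∈ range l, (α i - α j)) /
          ∏ j ∈ (range (k + 1)).erase i, (α i - α j)
      = c k := by
  simp_rw [sum_div, mul_div_assoc]
  rw [sum_comm]
  simp_rw [← mul_sum, sum_prod_range_sub_div_prod_erase hα, mul_ite, mul_one, mul_zero]
  rw [sum_ite_eq', if_pos (mem_range.mpr (Nat.lt_succ_of_le hkn))]

theorem stmt_6 (m r : ℝ) (hm : m ≠ 0) (α : ℕ → ℝ)
    (hα : ∀ i j : ℕ, i ≠ j → α i ≠ α j) (W : ℕ → ℕ → ℝ)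
    (hW : ∀ n : ℕ, ∀ x : ℝ, (m * x + r) ^ n =
      ∑ k ∈ range (n + 1), W n k * m ^ k * ∏ i ∈ range k, (x - α i)) :
    ∀ n k : ℕ, k ≤ n →
      W n k = ∑ i ∈ range (k + 1),
        (r + m * α i) ^ n / (m ^ k * ∏ j ∈ (range (k + 1)).erase i, (α i - α j)) := by
  intro n k hkn
  have hinj : Set.InjOn α (range (k + 1)) := fun i _ j _ => not_imp_not.mp (hα i j)
  have hsum : ∑ i ∈ range (k + 1),
      (r + m * α i) ^ n / ∏ j ∈ (range (k + 1)).erase i, (α i - α j) = W n k * m ^ k := by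
    simp_rw [add_comm r, hW n]
    exact sum_newton_div_prod_erase hinj hkn (fun l => W n l * m ^ l)
  simp_rw [mul_comm (m ^ k), ← div_div, ← sum_div, hsum, mul_div_cancel_right₀ _ (pow_ne_zero k hm)]
end

section
/- The exponential generating function Σ_{n≥k} W_{m,r;α}(n,k)·t^n/n! equals Σ_{i=0}^{k} e^{(r+m·α_i)t} / ∏_{j=0, j≠i}^{k} (m·α_i - m·α_j). -/
open Finset Polynomial

/-! With the nodes `βᵢ = r + m αᵢ` one has `(m x + r) - βᵢ = m (x - αᵢ)`, so the defining identity
says that `W n 0, W n 1, …` are the coefficients of `y ↦ y ^ n` in Newton form with respect to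
`β₀, β₁, …`. The `k`-th divided difference of a polynomial in Newton form is its `k`-th Newton
coefficient, hence `W n k = ∑ᵢ βᵢ ^ n / ∏_{j ≠ i} (βᵢ - βⱼ)`, and summing against `tⁿ / n!` turns
each `βᵢ ^ n` into `exp (βᵢ t)`. -/

section DividedDifference

variable {F : Type*} [Field F]

/-- The divided difference `f[β₀, …, βₖ]`, in its symmetric (Lagrange) form. -/
def dividedDifference (β : ℕ → F) (k : ℕ) (f : F → F) : F :=
  ∑ i ∈ range (k + 1), f (β i) / ∏ j ∈ (range (k + 1)).erase i, (β i - β j)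

theorem dividedDifference_congr {β : ℕ → F} {k : ℕ} {f g : F → F}
    (h : ∀ i ≤ k, f (β i) = g (β i)) :
    dividedDifference β k f = dividedDifference β k g :=
  sum_congr rfl fun i hi => by rw [h i (Nat.lt_succ_iff.mp (mem_range.mp hi))]

theorem dividedDifference_newton {β : ℕ → F} {k : ℕ} (hβ : Set.InjOn β (range (k + 1)))
    (c : ℕ → F) :
    dividedDifference β k (fun y => ∑ j ∈ range (k + 1), c j * ∏ l ∈ range j, (y - β l)) =
      c k := by
  set P : F[X] := ∑ j ∈ range (k + 1), C (c j) * Lagrange.nodal (range j) β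
  have hnatDegree : P.natDegree ≤ k := by
    refine natDegree_sum_le_of_forall_le _ _ fun j hj => (natDegree_C_mul_le _ _).trans ?_
    rw [Lagrange.natDegree_nodal, card_range]
    exact Nat.lt_succ_iff.mp (mem_range.mp hj)
  have hdegree : P.degree < #(range (k + 1)) := by
    rw [card_range]
    exact (degree_le_of_natDegree_le hnatDegree).trans_lt (WithBot.coe_lt_coe.mpr k.lt_succ_self)
  have hcoeff : P.coeff k = c k := by
    rw [finsetSum_coeff, sum_eq_single_of_mem k (self_mem_range_succ k), coeff_C_mul]
    · have hlead := (Lagrange.nodal_monic (s := range k) (v := β)).coeff_natDegree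
      rw [Lagrange.natDegree_nodal, card_range] at hlead
      rw [hlead, mul_one]
    · intro j hj hjk
      rw [coeff_C_mul, coeff_eq_zero_of_natDegree_lt, mul_zero]
      rw [Lagrange.natDegree_nodal, card_range]
      exact lt_of_le_of_ne (Nat.lt_succ_iff.mp (mem_range.mp hj)) hjk
  have heval : ∀ y, P.eval y = ∑ j ∈ range (k + 1), c j * ∏ l ∈ range j, (y - β l) := by
    intro y
    simp [P, eval_finsetSum, Lagrange.eval_nodal]
  have hsum := Lagrange.coeff_eq_sum hβ hdegree
  rw [card_range, Nat.add_sub_cancel, hcoeff] at hsum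
  simp only [dividedDifference, ← heval, hsum]

end DividedDifference

theorem hasSum_dividedDifference_pow_mul_div_factorial (β : ℕ → ℝ) (k : ℕ) (t : ℝ) :
    HasSum (fun n => dividedDifference β k (· ^ n) * t ^ n / n.factorial)
      (dividedDifference β k fun y => Real.exp (y * t)) := by
  simp only [dividedDifference, sum_mul, sum_div]
  refine hasSum_sum fun i _ => ?_
  rw [Real.exp_eq_exp_ℝ]
  refine ((NormedSpace.expSeries_div_hasSum_exp (β i * t)).div_const
    (∏ j ∈ (range (k + 1)).erase i, (β i - β j))).congr_fun fun n => ?_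
  ring

theorem pow_node_eq_newton_sum {m r : ℝ} {α : ℕ → ℝ} {W : ℕ → ℕ → ℝ}
    (hW : ∀ n : ℕ, ∀ x : ℝ, (m * x + r) ^ n =
      ∑ k ∈ range (n + 1), W n k * m ^ k * ∏ i ∈ range k, (x - α i))
    (hWz : ∀ n k : ℕ, n < k → W n k = 0) (n : ℕ) {i k : ℕ} (hik : i ≤ k) :
    (r + m * α i) ^ n =
      ∑ j ∈ range (k + 1), W n j * ∏ l ∈ range j, (r + m * α i - (r + m * α l)) := by
  set g : ℕ → ℝ := fun j => W n j * ∏ l ∈ range j, (r + m * α i - (r + m * α l))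
  have hg : ∀ j, W n j * m ^ j * ∏ l ∈ range j, (α i - α l) = g j := by
    intro j
    simp only [g, add_sub_add_left_eq_sub, ← mul_sub, prod_mul_distrib, prod_const, card_range,
      mul_assoc]
  -- beyond `n` the coefficient vanishes, beyond `i` the Newton product has the factor `βᵢ - βᵢ`
  have hvanish : ∀ j ≥ min (n + 1) (i + 1), g j = 0 := by
    intro j hj
    rcases lt_or_ge n j with hnj | hjn
    · exact mul_eq_zero_of_left (hWz n j hnj) _
    · exact mul_eq_zero_of_right _ <| prod_eq_zero (mem_range.mpr (by omega)) (sub_self _)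
  calc (r + m * α i) ^ n = ∑ j ∈ range (n + 1), g j := by
        rw [add_comm, hW n (α i)]
        exact sum_congr rfl fun j _ => hg j
    _ = ∑ j ∈ range (k + 1), g j := by
        rw [eventually_constant_sum hvanish (min_le_left _ _),
          eventually_constant_sum (n := k + 1) hvanish (by omega)]

theorem stmt_7 (m r : ℝ) (hm : m ≠ 0) (α : ℕ → ℝ)
    (hα : ∀ i j : ℕ, i ≠ j → α i ≠ α j) (W : ℕ → ℕ → ℝ)
    (hW : ∀ n : ℕ, ∀ x : ℝ, (m * x + r) ^ n =
      ∑ k ∈ range (n + 1), W n k * m ^ k * ∏ i ∈ range k, (x - α i))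
    (hWz : ∀ n k : ℕ, n < k → W n k = 0) :
    ∀ (k : ℕ) (t : ℝ),
      ∑' n : ℕ, W n k * t ^ n / n.factorial =
        ∑ i ∈ range (k + 1),
          Real.exp ((r + m * α i) * t) /
            ∏ j ∈ (range (k + 1)).erase i, (m * α i - m * α j) := by
  intro k t
  set β : ℕ → ℝ := fun i => r + m * α i
  have hβ : Set.InjOn β (range (k + 1)) := fun i _ j _ hij =>
    not_ne_iff.mp fun hne => hα i j hne (mul_left_cancel₀ hm (add_left_cancel hij))
  have hWdd : ∀ n, W n k = dividedDifference β k (· ^ n) := fun n =>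
    (dividedDifference_newton hβ (W n)).symm.trans <| dividedDifference_congr fun i hi =>
      (pow_node_eq_newton_sum hW hWz n hi).symm
  simp only [hWdd]
  rw [(hasSum_dividedDifference_pow_mul_div_factorial β k t).tsum_eq]
  simp only [dividedDifference, β, add_sub_add_left_eq_sub]
end

section
/- With parameters α_i = i^p, the relation m^{n-i}·s_1(n,i,p) = Σ_{k=i}^{n} C(k,i)·r^{k-i}·w_{m,r;i^p}(n,k) holds, where s_1(n,i,p) are the p-Stirling numbers of the first kind. -/
/-! Both sides of the defining identity of `w` are polynomials in `x`. Expanding `(m x + r)^k`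
binomially and comparing coefficients of `x^i` gives `m^n s₁(n,i) = Σ_k w(n,k) C(k,i) m^i r^(k-i)`;
dividing by `m^i` gives the claim. -/

open Finset Polynomial

namespace Polynomial

variable {R : Type*} [CommSemiring R]

theorem coeff_C_mul_X_add_C_pow (a b : R) (k i : ℕ) :
    ((C a * X + C b) ^ k).coeff i = a ^ i * b ^ (k - i) * k.choose i := by
  have hterm : ∀ l ∈ range (k + 1), (C a * X) ^ l * C b ^ (k - l) * (k.choose l : R[X]) =
      C (a ^ l * b ^ (k - l) * k.choose l) * X ^ l := by
    intro l _
    simp only [C_mul, C_pow, ← C_eq_natCast, mul_pow]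
    ring
  rw [add_pow, sum_congr rfl hterm, finsetSum_coeff]
  simp only [coeff_C_mul_X_pow, sum_ite_eq, mem_range, Nat.lt_succ_iff]
  split_ifs with hik
  · rfl
  · rw [Nat.choose_eq_zero_of_lt (not_le.mp hik), Nat.cast_zero, mul_zero]

theorem coeff_sum_C_mul_X_pow (c : ℕ → R) {n i : ℕ} (hin : i ≤ n) :
    (∑ j ∈ range (n + 1), C (c j) * X ^ j).coeff i = c i := by
  simp [finsetSum_coeff, Nat.lt_succ_of_le hin]

theorem coeff_sum_C_mul_C_mul_X_add_C_pow (d : ℕ → R) (a b : R) (n i : ℕ) :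
    (∑ k ∈ range (n + 1), C (d k) * (C a * X + C b) ^ k).coeff i =
      ∑ k ∈ Icc i n, d k * (a ^ i * b ^ (k - i) * k.choose i) := by
  simp only [finsetSum_coeff, coeff_C_mul, coeff_C_mul_X_add_C_pow]
  symm
  apply sum_subset
  · intro k hk
    simp only [mem_Icc, mem_range] at hk ⊢
    omega
  · intro k hkn hk
    have hki : k < i := by
      simp only [mem_Icc, mem_range] at hkn hk
      omega
    rw [Nat.choose_eq_zero_of_lt hki, Nat.cast_zero, mul_zero, mul_zero]

end Polynomial

theorem stmt_11_general (m r : ℝ) (hm : m ≠ 0) (p : ℕ)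
    (s₁ : ℕ → ℕ → ℝ) (w : ℕ → ℕ → ℝ)
    (hs : ∀ n : ℕ, ∀ x : ℝ, ∏ j ∈ range n, (x - (j : ℝ) ^ p) =
      ∑ i ∈ range (n + 1), s₁ n i * x ^ i)
    (hw : ∀ n : ℕ, ∀ x : ℝ, m ^ n * ∏ j ∈ range n, (x - (j : ℝ) ^ p) =
      ∑ k ∈ range (n + 1), w n k * (m * x + r) ^ k) :
    ∀ n i : ℕ, i ≤ n →
      m ^ (n - i) * s₁ n i = ∑ k ∈ Icc i n, (k.choose i : ℝ) * r ^ (k - i) * w n k := by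
  intro n i hin
  have hprod : ∏ j ∈ range n, (X - C ((j : ℝ) ^ p)) = ∑ j ∈ range (n + 1), C (s₁ n j) * X ^ j :=
    funext fun x => by simp [eval_prod, eval_finsetSum, hs]
  have hscaled : C (m ^ n) * ∏ j ∈ range n, (X - C ((j : ℝ) ^ p)) =
      ∑ k ∈ range (n + 1), C (w n k) * (C m * X + C r) ^ k :=
    funext fun x => by simp [eval_prod, eval_finsetSum, hw]
  have hcoeff := congrArg (coeff · i) hscaled
  simp only [coeff_C_mul, hprod, coeff_sum_C_mul_X_pow _ hin,
    coeff_sum_C_mul_C_mul_X_add_C_pow] at hcoeff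
  apply mul_right_cancel₀ (pow_ne_zero i hm)
  calc m ^ (n - i) * s₁ n i * m ^ i = m ^ n * s₁ n i := by
        rw [mul_right_comm, ← pow_add, Nat.sub_add_cancel hin]
    _ = ∑ k ∈ Icc i n, w n k * (m ^ i * r ^ (k - i) * k.choose i) := hcoeff
    _ = (∑ k ∈ Icc i n, (k.choose i : ℝ) * r ^ (k - i) * w n k) * m ^ i := by
        rw [sum_mul]
        exact sum_congr rfl fun k _ => by ring

theorem stmt_11 (m r : ℝ) (hm : m ≠ 0) (p : ℕ) (hp : 0 < p)
    (s₁ : ℕ → ℕ → ℝ) (w : ℕ → ℕ → ℝ)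
    (hs : ∀ n : ℕ, ∀ x : ℝ, ∏ j ∈ range n, (x - (j : ℝ) ^ p) =
      ∑ i ∈ range (n + 1), s₁ n i * x ^ i)
    (hw : ∀ n : ℕ, ∀ x : ℝ, m ^ n * ∏ j ∈ range n, (x - (j : ℝ) ^ p) =
      ∑ k ∈ range (n + 1), w n k * (m * x + r) ^ k) :
    ∀ n i : ℕ, i ≤ n →
      m ^ (n - i) * s₁ n i = ∑ k ∈ Icc i n, (k.choose i : ℝ) * r ^ (k - i) * w n k :=
  stmt_11_general m r hm p s₁ w hs hw
end

section
/- The generalized Stirling numbers of the second kind and the generalized r-Whitney numbers of the second kind are related by m^i·W_{m,r;α}(n,i) = Σ_{k=i}^{n} C(n,k)·m^k·r^{n-k}·S_α(k,i) for 0 ≤ i ≤ n. -/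
/-!
Both sides are coefficients of `(m x + r)^n` in the Newton basis `∏_{j<i} (x - α_j)`: the left
side by definition of `W`, the right side after expanding `(m x + r)^n` binomially and every `x^k`
in the Newton basis. Newton coefficients are unique: by strong induction on `i`, evaluating at
`α_i` kills all basis elements of index `> i` and leaves a nonzero value for index `i`.
-/

open Finset

section NewtonBasis

variable {R : Type*} [CommRing R] [IsDomain R] {α : ℕ → R}

theorem newton_coeff_eq_zero_of_sum_eq_zero (hα : Function.Injective α) {n : ℕ} {c : ℕ → R}
    (h : ∀ x, ∑ i ∈ range (n + 1), c i * ∏ j ∈ range i, (x - α j) = 0) :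
    ∀ i ≤ n, c i = 0 := by
  intro i
  induction i using Nat.strong_induction_on with
  | _ i ih =>
    intro hi
    have hprod : ∏ j ∈ range i, (α i - α j) ≠ 0 :=
      prod_ne_zero_iff.2 fun j hj ↦ sub_ne_zero.2 (hα.ne (mem_range.1 hj).ne')
    have hsum := h (α i)
    rw [sum_eq_single i] at hsum
    · exact (mul_eq_zero.1 hsum).resolve_right hprod
    · intro b hb hbi
      rcases lt_or_gt_of_ne hbi with hlt | hgt
      · rw [ih b hlt (by omega), zero_mul]
      · rw [prod_eq_zero (mem_range.2 hgt) (sub_self _), mul_zero]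
    · exact fun hni ↦ absurd (mem_range.2 (by omega)) hni

theorem newton_coeff_unique (hα : Function.Injective α) {n : ℕ} {c d : ℕ → R}
    (h : ∀ x, ∑ i ∈ range (n + 1), c i * ∏ j ∈ range i, (x - α j) =
      ∑ i ∈ range (n + 1), d i * ∏ j ∈ range i, (x - α j)) :
    ∀ i ≤ n, c i = d i := by
  have hdiff : ∀ x, ∑ i ∈ range (n + 1), (c - d) i * ∏ j ∈ range i, (x - α j) = 0 := fun x ↦ by
    simp only [Pi.sub_apply, sub_mul, sum_sub_distrib, h, sub_self]
  exact fun i hi ↦ sub_eq_zero.1 (newton_coeff_eq_zero_of_sum_eq_zero hα hdiff i hi)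

end NewtonBasis

theorem add_pow_eq_sum_newton {R : Type*} [CommRing R] (m r x : R) (α : ℕ → R)
    (S : ℕ → ℕ → R)
    (hS : ∀ k x, x ^ k = ∑ i ∈ range (k + 1), S k i * ∏ j ∈ range i, (x - α j)) (n : ℕ) :
    (m * x + r) ^ n = ∑ i ∈ range (n + 1),
      (∑ k ∈ Icc i n, (n.choose k : R) * m ^ k * r ^ (n - k) * S k i) *
        ∏ j ∈ range i, (x - α j) := by
  calc (m * x + r) ^ n
      = ∑ k ∈ range (n + 1), (n.choose k : R) * m ^ k * r ^ (n - k) * x ^ k := by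
        rw [add_pow]
        exact sum_congr rfl fun k _ ↦ by ring
    _ = ∑ k ∈ range (n + 1), ∑ i ∈ range (k + 1),
          (n.choose k : R) * m ^ k * r ^ (n - k) * S k i * ∏ j ∈ range i, (x - α j) := by
        simp only [hS _ x, mul_sum, mul_assoc]
    _ = ∑ i ∈ range (n + 1), ∑ k ∈ Icc i n,
          (n.choose k : R) * m ^ k * r ^ (n - k) * S k i * ∏ j ∈ range i, (x - α j) :=
        sum_comm' fun k i ↦ by simp only [mem_range, mem_Icc]; omega
    _ = _ := by simp only [sum_mul]

theorem stmt_15_general (m r : ℝ) (α : ℕ → ℝ)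
    (hα : ∀ i j : ℕ, i ≠ j → α i ≠ α j)
    (S : ℕ → ℕ → ℝ) (W : ℕ → ℕ → ℝ)
    (hS : ∀ k : ℕ, ∀ x : ℝ, x ^ k =
      ∑ i ∈ range (k + 1), S k i * ∏ j ∈ range i, (x - α j))
    (hW : ∀ n : ℕ, ∀ x : ℝ, (m * x + r) ^ n =
      ∑ i ∈ range (n + 1), W n i * m ^ i * ∏ j ∈ range i, (x - α j)) :
    ∀ n i : ℕ, i ≤ n →
      m ^ i * W n i = ∑ k ∈ Icc i n, (n.choose k : ℝ) * m ^ k * r ^ (n - k) * S k i := by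
  intro n
  have hα_inj : Function.Injective α := fun i j hij ↦ by_contra fun hne ↦ hα i j hne hij
  refine newton_coeff_unique hα_inj fun x ↦ ?_
  rw [← add_pow_eq_sum_newton m r x α S hS n, hW n x]
  exact sum_congr rfl fun i _ ↦ by ring

theorem stmt_15 (m r : ℝ) (hm : m ≠ 0) (α : ℕ → ℝ)
    (hα : ∀ i j : ℕ, i ≠ j → α i ≠ α j)
    (S : ℕ → ℕ → ℝ) (W : ℕ → ℕ → ℝ)
    (hS : ∀ k : ℕ, ∀ x : ℝ, x ^ k =
      ∑ i ∈ range (k + 1), S k i * ∏ j ∈ range i, (x - α j))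
    (hW : ∀ n : ℕ, ∀ x : ℝ, (m * x + r) ^ n =
      ∑ i ∈ range (n + 1), W n i * m ^ i * ∏ j ∈ range i, (x - α j)) :
    ∀ n i : ℕ, i ≤ n →
      m ^ i * W n i = ∑ k ∈ Icc i n, (n.choose k : ℝ) * m ^ k * r ^ (n - k) * S k i :=
  stmt_15_general m r α hα S W hS hW
end

section
/- The multiparameter Stirling numbers of the first kind connect the r-Whitney numbers of the second kind to the generalized r-Whitney numbers of the second kind: Σ_{k=i}^{n} m^{k-i}·W_{m,r}(n,k)·s(k,i;α) = W_{m,r;α}(n,i) for 0 ≤ i ≤ n. -/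
open Finset

/-! Expanding the falling factorials of the `(x)_k`-expansion of `(m x + r)^n` in the Newton
basis `(x; α)_i` gives a second expansion of `(m x + r)^n` in that basis. Since the nodes `α j` are
distinct, the Newton basis is linearly independent (evaluate at `α i`, by strong induction on
`i`), so its coefficients agree with `Wα n i * m^i`. -/

theorem sum_mul_eq_sum_sum_mul_of_triangular {R : Type*} [CommSemiring R] (a : ℕ → R)
    (b : ℕ → ℕ → R) (P Q : ℕ → R) (hP : ∀ k, P k = ∑ i ∈ range (k + 1), b k i * Q i) (n : ℕ) :
    ∑ k ∈ range (n + 1), a k * P k = ∑ i ∈ range (n + 1), (∑ k ∈ Icc i n, a k * b k i) * Q i := by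
  simp_rw [hP, mul_sum, sum_mul, mul_assoc]
  exact sum_comm' fun k i => by simp only [mem_range, mem_Icc]; omega

section NewtonBasis

variable {R : Type*} [CommRing R] [IsDomain R] {α : ℕ → R}

theorem newton_coeff_eq_zero (hα : Function.Injective α) {N : ℕ} {c : ℕ → R}
    (h : ∀ x, ∑ i ∈ range (N + 1), c i * ∏ j ∈ range i, (x - α j) = 0) {i : ℕ} (hi : i ≤ N) :
    c i = 0 := by
  induction i using Nat.strong_induction_on with
  | _ i ih =>
    have hsingle : ∑ k ∈ range (N + 1), c k * ∏ j ∈ range k, (α i - α j)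
        = c i * ∏ j ∈ range i, (α i - α j) := by
      refine sum_eq_single i (fun k _ hki => ?_) (fun hi' => absurd (mem_range.2 (by omega)) hi')
      rcases lt_or_gt_of_ne hki with hlt | hgt
      · rw [ih k hlt (by omega), zero_mul]
      · rw [prod_eq_zero (mem_range.2 hgt) (sub_self _), mul_zero]
    have hprod : ∏ j ∈ range i, (α i - α j) ≠ 0 :=
      prod_ne_zero_iff.2 fun j hj => sub_ne_zero.2 fun h => (mem_range.1 hj).ne' (hα h)
    have hzero := h (α i)
    rw [hsingle] at hzero
    exact (mul_eq_zero.1 hzero).resolve_right hprod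

theorem newton_coeff_eq (hα : Function.Injective α) {N : ℕ} {c d : ℕ → R}
    (h : ∀ x, ∑ i ∈ range (N + 1), c i * ∏ j ∈ range i, (x - α j)
      = ∑ i ∈ range (N + 1), d i * ∏ j ∈ range i, (x - α j)) {i : ℕ} (hi : i ≤ N) :
    c i = d i :=
  sub_eq_zero.1 <| newton_coeff_eq_zero hα (c := c - d)
    (fun x => by simp only [Pi.sub_apply, sub_mul, sum_sub_distrib, h x, sub_self]) hi

end NewtonBasis

theorem stmt_16 (m r : ℝ) (hm : m ≠ 0) (α : ℕ → ℝ)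
    (hα : ∀ i j : ℕ, i ≠ j → α i ≠ α j)
    (W : ℕ → ℕ → ℝ) (s : ℕ → ℕ → ℝ) (Wα : ℕ → ℕ → ℝ)
    (hW : ∀ n : ℕ, ∀ x : ℝ, (m * x + r) ^ n =
      ∑ k ∈ range (n + 1), W n k * m ^ k * ∏ i ∈ range k, (x - (i : ℝ)))
    (hs : ∀ n : ℕ, ∀ x : ℝ, ∏ i ∈ range n, (x - (i : ℝ)) =
      ∑ k ∈ range (n + 1), s n k * ∏ j ∈ range k, (x - α j))
    (hWα : ∀ n : ℕ, ∀ x : ℝ, (m * x + r) ^ n =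
      ∑ i ∈ range (n + 1), Wα n i * m ^ i * ∏ j ∈ range i, (x - α j)) :
    ∀ n i : ℕ, i ≤ n →
      ∑ k ∈ Icc i n, m ^ (k - i) * W n k * s k i = Wα n i := by
  intro n i hin
  have hα_inj : Function.Injective α := fun i j h => by_contra fun hij => hα i j hij h
  have hcoeff : ∑ k ∈ Icc i n, W n k * m ^ k * s k i = Wα n i * m ^ i :=
    newton_coeff_eq hα_inj (d := fun i => Wα n i * m ^ i) (fun x => by
      rw [← sum_mul_eq_sum_sum_mul_of_triangular _ _ _ _ (fun k => hs k x), ← hW, hWα]) hin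
  calc ∑ k ∈ Icc i n, m ^ (k - i) * W n k * s k i
      = (∑ k ∈ Icc i n, W n k * m ^ k * s k i) / m ^ i := by
        rw [sum_div]
        refine sum_congr rfl fun k hk => ?_
        rw [eq_div_iff (pow_ne_zero i hm), ← pow_sub_mul_pow m (mem_Icc.1 hk).1]
        ring
    _ = Wα n i := by rw [hcoeff, mul_div_cancel_right₀ _ (pow_ne_zero i hm)]
end

section
/- The multiparameter Stirling numbers of the second kind are expressed via the generalized r-Whitney numbers of the first kind and r-Whitney numbers of the second kind: m^{n-i}·S(n,i;α) = Σ_{k=i}^{n} w_{m,r;α}(n,k)·W_{m,r}(k,i) for 0 ≤ i ≤ n. -/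
/-!
Substituting the expansion of `(m x + r)^k` in falling factorials into the expansion of
`m^n (x;α)_n` in powers of `m x + r` expresses `m^n (x;α)_n` in the falling-factorial basis with
coefficients `m^i ∑_k w(n,k) W(k,i)`; the defining expansion of `S` gives coefficients
`m^n S(n,i)`. Falling factorials are linearly independent as functions (evaluate at `x = i`,
where `(x)_j` vanishes for `j > i` and `(i)_i = i! ≠ 0`), so the coefficients agree.
-/

open Finset

theorem Finset.sum_range_succ_mul_sum_range_succ_eq {R : Type*} [CommSemiring R] (n : ℕ)
    (a : ℕ → R) (b : ℕ → ℕ → R) (p : ℕ → R) :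
    ∑ k ∈ range (n + 1), a k * ∑ i ∈ range (k + 1), b k i * p i =
      ∑ i ∈ range (n + 1), (∑ k ∈ Icc i n, a k * b k i) * p i := by
  simp_rw [mul_sum, sum_mul, mul_assoc]
  exact sum_comm' fun k i => by simp only [mem_range, mem_Icc]; omega

theorem prod_range_natCast_sub_natCast_ne_zero {R : Type*} [CommRing R] [IsDomain R]
    [CharZero R] (i : ℕ) : ∏ j ∈ range i, ((i : R) - j) ≠ 0 :=
  prod_ne_zero_iff.mpr fun _ hj => sub_ne_zero.mpr <| Nat.cast_injective.ne (mem_range.mp hj).ne'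

theorem eq_zero_of_forall_sum_mul_prod_sub_natCast_eq_zero {R : Type*} [CommRing R]
    [IsDomain R] [CharZero R] (N : ℕ) (c : ℕ → R)
    (h : ∀ x : R, ∑ i ∈ range (N + 1), c i * ∏ j ∈ range i, (x - j) = 0) :
    ∀ i ≤ N, c i = 0 := by
  intro i
  induction i using Nat.strong_induction_on with
  | _ i ih =>
    intro hi
    have hterm : ∀ t ∈ range (N + 1), t ≠ i → c t * ∏ j ∈ range t, ((i : R) - j) = 0 := by
      intro t _ hti
      rcases hti.lt_or_gt with hlt | hgt
      · rw [ih t hlt (hlt.le.trans hi), zero_mul]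
      · exact mul_eq_zero_of_right _ <| prod_eq_zero (mem_range.mpr hgt) (sub_self _)
    have hi' := h i
    rw [sum_eq_single_of_mem i (mem_range.mpr (Nat.lt_succ_of_le hi)) hterm] at hi'
    exact (mul_eq_zero.mp hi').resolve_right (prod_range_natCast_sub_natCast_ne_zero i)

theorem eq_of_forall_sum_mul_prod_sub_natCast_eq {R : Type*} [CommRing R] [IsDomain R]
    [CharZero R] (N : ℕ) (c d : ℕ → R)
    (h : ∀ x : R, ∑ i ∈ range (N + 1), c i * ∏ j ∈ range i, (x - j) =
      ∑ i ∈ range (N + 1), d i * ∏ j ∈ range i, (x - j)) :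
    ∀ i ≤ N, c i = d i := fun i hi => sub_eq_zero.mp <|
  eq_zero_of_forall_sum_mul_prod_sub_natCast_eq_zero N (fun i => c i - d i)
    (fun x => by simp only [sub_mul, sum_sub_distrib, h x, sub_self]) i hi

theorem stmt_17 (m r : ℝ) (hm : m ≠ 0) (α : ℕ → ℝ)
    (S : ℕ → ℕ → ℝ) (w : ℕ → ℕ → ℝ) (W : ℕ → ℕ → ℝ)
    (hS : ∀ n : ℕ, ∀ x : ℝ, ∏ j ∈ range n, (x - α j) =
      ∑ i ∈ range (n + 1), S n i * ∏ j ∈ range i, (x - (j : ℝ)))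
    (hw : ∀ n : ℕ, ∀ x : ℝ, m ^ n * ∏ j ∈ range n, (x - α j) =
      ∑ k ∈ range (n + 1), w n k * (m * x + r) ^ k)
    (hW : ∀ k : ℕ, ∀ x : ℝ, (m * x + r) ^ k =
      ∑ i ∈ range (k + 1), W k i * m ^ i * ∏ j ∈ range i, (x - (j : ℝ))) :
    ∀ n i : ℕ, i ≤ n →
      m ^ (n - i) * S n i = ∑ k ∈ Icc i n, w n k * W k i := by
  intro n i hi
  have hexpand : ∀ x : ℝ, ∑ i ∈ range (n + 1), m ^ n * S n i * ∏ j ∈ range i, (x - j) =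
      ∑ i ∈ range (n + 1), (m ^ i * ∑ k ∈ Icc i n, w n k * W k i) * ∏ j ∈ range i, (x - j) := by
    intro x
    calc ∑ i ∈ range (n + 1), m ^ n * S n i * ∏ j ∈ range i, (x - j)
        = m ^ n * ∏ j ∈ range n, (x - α j) := by rw [hS, mul_sum]; simp only [mul_assoc]
      _ = ∑ i ∈ range (n + 1),
            (∑ k ∈ Icc i n, w n k * W k i) * (m ^ i * ∏ j ∈ range i, (x - j)) := by
        simp only [hw, hW, mul_assoc]
        exact sum_range_succ_mul_sum_range_succ_eq n _ _ _
      _ = _ := sum_congr rfl fun _ _ => by ring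
  have hcoeff := eq_of_forall_sum_mul_prod_sub_natCast_eq n _ _ hexpand i hi
  apply mul_left_cancel₀ (pow_ne_zero i hm)
  rw [← mul_assoc, pow_mul_pow_sub m hi]
  exact hcoeff
end

section
/- The r-Whitney numbers of the second kind decompose through the generalized r-Whitney numbers of the second kind and the multiparameter Stirling numbers of the second kind: W_{m,r}(n,k) = Σ_{i=k}^{n} W_{m,r;α}(n,i)·S(i,k;α)·m^{i-k} for 0 ≤ k ≤ n. -/
/-!
Expanding `(x;α)_i` in the falling factorials turns the `α`-expansion of `(mx+r)^n` into a
falling-factorial expansion whose coefficient of `m^k (x)_k` is the claimed sum. Falling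
factorial expansions are unique: evaluating at `x = k` kills every `(x)_j` with `j > k`,
and `(k)_k = k! ≠ 0`, so the coefficients agree by strong induction on `k`.
-/

open Finset

section FallingFactorial

variable {R : Type*} [CommRing R] [IsDomain R] [CharZero R]

lemma prod_range_natCast_sub_ne_zero (k : ℕ) : ∏ i ∈ range k, ((k : R) - i) ≠ 0 :=
  prod_ne_zero_iff.mpr fun _ hi =>
    sub_ne_zero.mpr <| Nat.cast_injective.ne (mem_range.mp hi).ne'

lemma eq_zero_of_sum_mul_prod_range_sub_eq_zero {N : ℕ} {a : ℕ → R}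
    (h : ∀ x : ℕ, ∑ k ∈ range (N + 1), a k * ∏ i ∈ range k, ((x : R) - i) = 0) :
    ∀ k ≤ N, a k = 0 := by
  intro k
  induction k using Nat.strong_induction_on with
  | _ k ih =>
    intro hk
    have hsingle : ∑ j ∈ range (N + 1), a j * ∏ i ∈ range j, ((k : R) - i)
        = a k * ∏ i ∈ range k, ((k : R) - i) := by
      refine sum_eq_single_of_mem k (mem_range.mpr (by omega)) fun j _ hjk => ?_
      rcases lt_or_gt_of_ne hjk with hlt | hgt
      · rw [ih j hlt (by omega), zero_mul]
      · rw [prod_eq_zero (mem_range.mpr hgt) (sub_self _), mul_zero]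
    have h_k := h k
    rw [hsingle] at h_k
    exact (mul_eq_zero.mp h_k).resolve_right (prod_range_natCast_sub_ne_zero k)

lemma coeff_eq_of_sum_mul_prod_range_sub_eq {N : ℕ} {a b : ℕ → R}
    (h : ∀ x : ℕ, ∑ k ∈ range (N + 1), a k * ∏ i ∈ range k, ((x : R) - i)
      = ∑ k ∈ range (N + 1), b k * ∏ i ∈ range k, ((x : R) - i)) :
    ∀ k ≤ N, a k = b k := by
  have hdiff := eq_zero_of_sum_mul_prod_range_sub_eq_zero (N := N) (a := a - b) fun x => by
    simp only [Pi.sub_apply, sub_mul, sum_sub_distrib, h x, sub_self]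
  exact fun k hk => sub_eq_zero.mp (hdiff k hk)

end FallingFactorial

lemma sum_mul_eq_sum_sum_Icc_mul {R : Type*} [CommSemiring R] {p q : ℕ → R}
    (S : ℕ → ℕ → R) (hpq : ∀ i, p i = ∑ k ∈ range (i + 1), S i k * q k) (c : ℕ → R) (n : ℕ) :
    ∑ i ∈ range (n + 1), c i * p i
      = ∑ k ∈ range (n + 1), (∑ i ∈ Icc k n, c i * S i k) * q k := by
  simp only [hpq, mul_sum, sum_mul, mul_assoc]
  exact sum_comm' fun i k => by simp only [mem_range, mem_Icc]; omega

theorem stmt_18_general (m r : ℝ) (hm : m ≠ 0) (α : ℕ → ℝ)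
    (W : ℕ → ℕ → ℝ) (Wα : ℕ → ℕ → ℝ) (S : ℕ → ℕ → ℝ)
    (hW : ∀ n : ℕ, ∀ x : ℝ, (m * x + r) ^ n =
      ∑ k ∈ range (n + 1), W n k * m ^ k * ∏ i ∈ range k, (x - (i : ℝ)))
    (hWα : ∀ n : ℕ, ∀ x : ℝ, (m * x + r) ^ n =
      ∑ i ∈ range (n + 1), Wα n i * m ^ i * ∏ j ∈ range i, (x - α j))
    (hS : ∀ i : ℕ, ∀ x : ℝ, ∏ j ∈ range i, (x - α j) =
      ∑ k ∈ range (i + 1), S i k * ∏ j ∈ range k, (x - (j : ℝ))) :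
    ∀ n k : ℕ, k ≤ n →
      W n k = ∑ i ∈ Icc k n, Wα n i * S i k * m ^ (i - k) := by
  intro n k hk
  have hcoeff := coeff_eq_of_sum_mul_prod_range_sub_eq (N := n)
    (a := fun k => W n k * m ^ k) (b := fun k => ∑ i ∈ Icc k n, Wα n i * m ^ i * S i k)
    fun x => by rw [← hW, hWα, sum_mul_eq_sum_sum_Icc_mul S (hS · x)]
  have hpow : ∀ i ∈ Icc k n, Wα n i * m ^ i * S i k = Wα n i * S i k * m ^ (i - k) * m ^ k :=
    fun i hi => by
      rw [mul_assoc, ← pow_sub_mul_pow m (mem_Icc.mp hi).1]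
      ring
  have h := hcoeff k hk
  simp only [sum_congr rfl hpow, ← sum_mul] at h
  exact mul_right_cancel₀ (pow_ne_zero k hm) h

theorem stmt_18 (m r : ℝ) (hm : m ≠ 0) (α : ℕ → ℝ)
    (hα : ∀ i j : ℕ, i ≠ j → α i ≠ α j)
    (W : ℕ → ℕ → ℝ) (Wα : ℕ → ℕ → ℝ) (S : ℕ → ℕ → ℝ)
    (hW : ∀ n : ℕ, ∀ x : ℝ, (m * x + r) ^ n =
      ∑ k ∈ range (n + 1), W n k * m ^ k * ∏ i ∈ range k, (x - (i : ℝ)))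
    (hWα : ∀ n : ℕ, ∀ x : ℝ, (m * x + r) ^ n =
      ∑ i ∈ range (n + 1), Wα n i * m ^ i * ∏ j ∈ range i, (x - α j))
    (hS : ∀ i : ℕ, ∀ x : ℝ, ∏ j ∈ range i, (x - α j) =
      ∑ k ∈ range (i + 1), S i k * ∏ j ∈ range k, (x - (j : ℝ))) :
    ∀ n k : ℕ, k ≤ n →
      W n k = ∑ i ∈ Icc k n, Wα n i * S i k * m ^ (i - k) :=
  stmt_18_general m r hm α W Wα S hW hWα hS
end
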